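/- Let B, C be categories, φ : F → G a transformation of type |α| —σ→ n ←τ— |β| and ψ : G → H a transformation of type |β| —η→ m ←θ— |γ|, both dinatural in all of their variables. If the composite graph Γ(ψ) ∘ Γ(φ) is acyclic, then the vertical composite ψ∘φ is dinatural in all of its variables. -/

import Mathlib

open CategoryTheory Opposite

universe v u v' u'

/-- `SignObj B s` is `B` if the sign `s` is `true` (covariant) and `Bᵒᵖ` if `s` is `false`. -/
def SignObj (B : Type u) : Bool → Type u
  | true => B
  | false => Bᵒᵖ

instance signObjCategory (B : Type u) [Category.{v} B] : ∀ s : Bool, Category.{v} (SignObj B s)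
  | true => inferInstanceAs (Category.{v} B)
  | false => inferInstanceAs (Category.{v} Bᵒᵖ)

/-- Interpret an object of `B` as an object of `B` or `Bᵒᵖ`, according to a sign. -/
def toSign {B : Type u} : ∀ s : Bool, B → SignObj B s
  | true, X => X
  | false, X => op X

/-- Forget the sign of an object. -/
def unSign {B : Type u} : ∀ {s : Bool}, SignObj B s → B
  | true, X => X
  | false, X => unop X

/-- A morphism of `B`, pointing in a direction prescribed by a sign. -/
def SignHom {B : Type u} [Category.{v} B] : Bool → B → B → Type v
  | true, X, Y => X ⟶ Y
  | false, X, Y => Y ⟶ X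

def toSignHom {B : Type u} [Category.{v} B] : ∀ {s : Bool} {X Y : B},
    SignHom s X Y → (toSign s X ⟶ toSign s Y)
  | true, _, _, f => f
  | false, _, _, f => f.op

def signId {B : Type u} [Category.{v} B] : ∀ (s : Bool) (X : B), SignHom s X X
  | true, X => 𝟙 X
  | false, X => 𝟙 X

/-- The mixed-variance power category `B^α`. -/
abbrev PowCat (B : Type u) [Category.{v} B] {κ : Type} (α : κ → Bool) : Type u :=
  ∀ j : κ, SignObj B (α j)

/-- The object of `B^α` whose `j`-th entry is `A (σ j)`. -/
abbrev tup {B : Type u} [Category.{v} B] {κ ι : Type} (α : κ → Bool) (σ : κ → ι)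
    (A : ι → B) : PowCat B α :=
  fun j => toSign (α j) (A (σ j))

/-- A transformation `φ : F → G` of type `σ, τ`: a family of morphisms
`φ_𝐀 : F (𝐀 σ) ⟶ G (𝐀 τ)` indexed by tuples `𝐀` of objects of `B`. -/
def Transf {B : Type u} [Category.{v} B] {C : Type u'} [Category.{v'} C] {κa κb ι : Type}
    (α : κa → Bool) (β : κb → Bool) (F : PowCat B α ⥤ C) (G : PowCat B β ⥤ C)
    (σ : κa → ι) (τ : κb → ι) : Type _ :=
  ∀ A : ι → B, F.obj (tup α σ A) ⟶ G.obj (tup β τ A)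

/-- The tuple `A` with its `i`-th entry replaced by `X`. -/
abbrev upd {ι : Type} [DecidableEq ι] {B : Type u} (A : ι → B) (i : ι) (X : B) : ι → B :=
  fun k => if k = i then X else A k

/-- The mixed-variance tuple `𝐀[X,Y/i]σ`: entries over the `i`-th variable are
`e false` in contravariant positions, `e true` in covariant ones. -/
abbrev tupMV {B : Type u} [Category.{v} B] {κ ι : Type} [DecidableEq ι] (α : κ → Bool)
    (σ : κ → ι) (A : ι → B) (i : ι) (e : Bool → B) : PowCat B α :=
  fun j => toSign (α j) (if σ j = i then e (α j) else A (σ j))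

def mvHom {B : Type u} [Category.{v} B] {e₁ e₂ : Bool → B}
    (g : e₂ false ⟶ e₁ false) (h : e₁ true ⟶ e₂ true) :
    ∀ s : Bool, SignHom s (e₁ s) (e₂ s)
  | true => h
  | false => g

/-- The canonical morphism `tupMV α σ A i e₁ ⟶ tupMV α σ A i e₂` acting by `h` on
covariant entries over `i`, (the opposite of) `g` on contravariant entries over `i`, and
the identity elsewhere. -/
def tupMVHom {B : Type u} [Category.{v} B] {κ ι : Type} [DecidableEq ι] (α : κ → Bool)
    (σ : κ → ι) (A : ι → B) (i : ι) (e₁ e₂ : Bool → B)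
    (g : e₂ false ⟶ e₁ false) (h : e₁ true ⟶ e₂ true) :
    tupMV α σ A i e₁ ⟶ tupMV α σ A i e₂ :=
  fun j => toSignHom
    (show SignHom (α j) (if σ j = i then e₁ (α j) else A (σ j))
        (if σ j = i then e₂ (α j) else A (σ j)) from
      if hj : σ j = i then by simp only [if_pos hj]; exact mvHom g h (α j)
      else by simp only [if_neg hj]; exact signId (α j) (A (σ j)))

/-- Dinaturality of a transformation in its `i`-th variable. -/
def DinatAt {B : Type u} [Category.{v} B] {C : Type u'} [Category.{v'} C] {κa κb ι : Type}
    [DecidableEq ι] {α : κa → Bool} {β : κb → Bool} {F : PowCat B α ⥤ C} {G : PowCat B β ⥤ C}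
    {σ : κa → ι} {τ : κb → ι} (φ : Transf α β F G σ τ) (i : ι) : Prop :=
  ∀ (A : ι → B) {X Y : B} (f : X ⟶ Y),
    F.map (tupMVHom α σ A i (fun s => bif s then X else Y) (fun _ => X) f (𝟙 X)) ≫
        φ (upd A i X) ≫
        G.map (tupMVHom β τ A i (fun _ => X) (fun s => bif s then Y else X) (𝟙 X) f) =
      F.map (tupMVHom α σ A i (fun s => bif s then X else Y) (fun _ => Y) (𝟙 Y) f) ≫
        φ (upd A i Y) ≫
        G.map (tupMVHom β τ A i (fun _ => Y) (fun s => bif s then Y else X) f (𝟙 Y))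

/-- Vertical composition of transformations along a cocone `ζ, ξ` on their types. -/
def vcomp {B : Type u} [Category.{v} B] {C : Type u'} [Category.{v'} C]
    {κa κb κc ι₁ ι₂ ι : Type} {α : κa → Bool} {β : κb → Bool} {γ : κc → Bool}
    {F : PowCat B α ⥤ C} {G : PowCat B β ⥤ C} {H : PowCat B γ ⥤ C}
    {σ : κa → ι₁} {τ : κb → ι₁} {η : κb → ι₂} {θ : κc → ι₂}
    (φ : Transf α β F G σ τ) (ψ : Transf β γ G H η θ)
    (ζ : ι₁ → ι) (ξ : ι₂ → ι) (hcomm : ∀ p, ζ (τ p) = ξ (η p)) :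
    Transf α γ F H (fun p => ζ (σ p)) (fun p => ξ (θ p)) :=
  fun A =>
    φ (fun x => A (ζ x)) ≫
      eqToHom (congrArg G.obj (by
        funext j
        show toSign (β j) (A (ζ (τ j))) = toSign (β j) (A (ξ (η j)))
        rw [hcomm j])) ≫
      ψ (fun x => A (ξ x))

section CompositeGraph

/-- Vertices of the composite graph `Γ(ψ) ∘ Γ(φ)`: the places are the arguments of the
three functors involved (with the middle ones identified), the transitions are the
variables of the two transformations. -/
abbrev CGV (wa wb wc n m : ℕ) : Type :=
  (Fin wa ⊕ Fin wb ⊕ Fin wc) ⊕ (Fin n ⊕ Fin m)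

variable {wa wb wc n m l : ℕ}

/-- The arcs of the composite graph `Γ(ψ) ∘ Γ(φ)` of two consecutive transformations of
types `σ₁, τ₁` and `σ₂, τ₂` between functors of variances `α, β` and `β, γ`. -/
def compArc (α : Fin wa → Bool) (β : Fin wb → Bool) (γ : Fin wc → Bool)
    (σ₁ : Fin wa → Fin n) (τ₁ : Fin wb → Fin n)
    (σ₂ : Fin wb → Fin m) (τ₂ : Fin wc → Fin m) :
    CGV wa wb wc n m → CGV wa wb wc n m → Prop
  | .inl (.inl p), .inr (.inl t) => σ₁ p = t ∧ α p = true
  | .inr (.inl t), .inl (.inl p) => σ₁ p = t ∧ α p = false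
  | .inl (.inr (.inl p)), .inr (.inl t) => τ₁ p = t ∧ β p = false
  | .inr (.inl t), .inl (.inr (.inl p)) => τ₁ p = t ∧ β p = true
  | .inl (.inr (.inl p)), .inr (.inr t) => σ₂ p = t ∧ β p = true
  | .inr (.inr t), .inl (.inr (.inl p)) => σ₂ p = t ∧ β p = false
  | .inl (.inr (.inr p)), .inr (.inr t) => τ₂ p = t ∧ γ p = false
  | .inr (.inr t), .inl (.inr (.inr p)) => τ₂ p = t ∧ γ p = true
  | _, _ => False

/-- The connected component (labelled by the pushout vertex `Fin l`) to which each
vertex of the composite graph belongs. -/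
def compOfV (σ₁ : Fin wa → Fin n) (τ₁ : Fin wb → Fin n)
    (σ₂ : Fin wb → Fin m) (τ₂ : Fin wc → Fin m)
    (ζ : Fin n → Fin l) (ξ : Fin m → Fin l) :
    CGV wa wb wc n m → Fin l
  | .inl (.inl p) => ζ (σ₁ p)
  | .inl (.inr (.inl p)) => ζ (τ₁ p)
  | .inl (.inr (.inr p)) => ξ (τ₂ p)
  | .inr (.inl t) => ζ t
  | .inr (.inr t) => ξ t

end CompositeGraph

/-!
Give every variable an arrow of `B`, encoded as a functor `D : Bool ⥤ B`, and a state saying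
which end of its arrow it currently uses. Dinaturality of a transformation in `x` is then
equivalent to: switching `x` from `false` to `true` does not change the composite
`F(u) ⟶ F(s) ⟶ G(s) ⟶ G(w)` through the transformation at state `s`, whenever both states fit
between the outer argument states `u` and `w`.

For `ψ ∘ φ` and its variable `i`, switching `i` means switching every transition of `Γ(φ)` and
`Γ(ψ)` over `i`. We do it one transition at a time, through composites that evaluate `φ` and
`ψ` at separate states and join them along `G`; such a composite only makes sense while the
fired transitions are closed under successors in `Γ(ψ) ∘ Γ(φ)`. Acyclicity always provides an
unfired transition all of whose successors have fired, and firing it is one instance of the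
dinaturality of `φ` or of `ψ`.
-/

section SignedStates

variable {B : Type u} [Category.{v} B]

/-- The order on the two ends of an arrow, reversed for a contravariant argument. -/
def SignLE : Bool → Bool → Bool → Prop
  | true, a, b => a ≤ b
  | false, a, b => b ≤ a

theorem SignLE.refl (s a : Bool) : SignLE s a a := by
  cases s <;> exact le_rfl

theorem SignLE.trans {s a b c : Bool} (h₁ : SignLE s a b) (h₂ : SignLE s b c) : SignLE s a c := by
  cases s
  exacts [le_trans h₂ h₁, le_trans h₁ h₂]

theorem signLE_not_left (s b : Bool) : SignLE s (!s) b := by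
  cases s
  exacts [Bool.le_true b, Bool.false_le b]

theorem signLE_self_right (s a : Bool) : SignLE s a s := by
  cases s
  exacts [Bool.false_le a, Bool.le_true a]

theorem SignLE.not_left_of_false_of_true {s a : Bool} (h₀ : SignLE s a false)
    (h₁ : SignLE s a true) : SignLE s a (!s) := by
  cases s <;> assumption

theorem SignLE.self_right_of_false_of_true {s a : Bool} (h₀ : SignLE s false a)
    (h₁ : SignLE s true a) : SignLE s s a := by
  cases s <;> assumption

def stateHom (D : Bool ⥤ B) :
    ∀ (s : Bool) {a b : Bool}, SignLE s a b → SignHom s (D.obj a) (D.obj b)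
  | true, _, _, h => D.map (homOfLE h)
  | false, _, _, h => D.map (homOfLE h)

theorem toSignHom_stateHom_comp (D : Bool ⥤ B) {s a b c : Bool} (h₁ : SignLE s a b)
    (h₂ : SignLE s b c) :
    toSignHom (stateHom D s h₁) ≫ toSignHom (stateHom D s h₂) =
      toSignHom (stateHom D s (h₁.trans h₂)) := by
  cases s
  · exact op_comp.symm.trans (congrArg Quiver.Hom.op (D.map_comp _ _).symm)
  · exact (D.map_comp _ _).symm

theorem toSignHom_stateHom_self (D : Bool ⥤ B) {s a : Bool} (h : SignLE s a a) :
    toSignHom (stateHom D s h) = 𝟙 _ := by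
  cases s
  · exact congrArg Quiver.Hom.op ((congrArg D.map (Subsingleton.elim _ _)).trans (D.map_id a))
  · exact (congrArg D.map (Subsingleton.elim _ _)).trans (D.map_id a)

theorem stateHom_heq {D D' : Bool ⥤ B} {s a b a' b' : Bool} (hD : D = D') (ha : a = a')
    (hb : b = b') (h : SignLE s a b) (h' : SignLE s a' b') :
    HEq (stateHom D s h) (stateHom D' s h') := by
  subst hD ha hb; rfl

variable {κ : Type}

def StateLE (α : κ → Bool) (u v : κ → Bool) : Prop :=
  ∀ j, SignLE (α j) (u j) (v j)

theorem StateLE.trans {α u v w : κ → Bool} (h₁ : StateLE α u v) (h₂ : StateLE α v w) :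
    StateLE α u w := fun j => (h₁ j).trans (h₂ j)

theorem StateLE.of_eq_or_right {α u v₀ v₁ v : κ → Bool} (h₀ : StateLE α u v₀)
    (h₁ : StateLE α u v₁) (hv : ∀ j, v j = v₀ j ∨ v j = v₁ j) : StateLE α u v := fun j => by
  rcases hv j with h | h <;> rw [h]
  exacts [h₀ j, h₁ j]

theorem StateLE.of_eq_or_left {α u₀ u₁ u w : κ → Bool} (h₀ : StateLE α u₀ w)
    (h₁ : StateLE α u₁ w) (hu : ∀ j, u j = u₀ j ∨ u j = u₁ j) : StateLE α u w := fun j => by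
  rcases hu j with h | h <;> rw [h]
  exacts [h₀ j, h₁ j]

abbrev stateObj (α : κ → Bool) (D : κ → Bool ⥤ B) (u : κ → Bool) : PowCat B α :=
  fun j => toSign (α j) ((D j).obj (u j))

def stateMap (α : κ → Bool) (D : κ → Bool ⥤ B) {u v : κ → Bool} (h : StateLE α u v) :
    stateObj α D u ⟶ stateObj α D v :=
  fun j => toSignHom (stateHom (D j) (α j) (h j))

theorem stateMap_comp (α : κ → Bool) (D : κ → Bool ⥤ B) {u v w : κ → Bool}
    (h₁ : StateLE α u v) (h₂ : StateLE α v w) :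
    stateMap α D h₁ ≫ stateMap α D h₂ = stateMap α D (h₁.trans h₂) :=
  funext fun j => toSignHom_stateHom_comp (D j) (h₁ j) (h₂ j)

theorem stateMap_of_eq (α : κ → Bool) (D : κ → Bool ⥤ B) {u v : κ → Bool}
    (huv : u = v) (h : StateLE α u v) :
    stateMap α D h = eqToHom (congrArg (stateObj α D) huv) := by
  subst huv
  exact funext fun j => toSignHom_stateHom_self (D j) (h j)

theorem stateMap_comp_eqToHom (α : κ → Bool) {D D' : κ → Bool ⥤ B} (hD : D = D')
    {u v : κ → Bool} (h : StateLE α u v) :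
    stateMap α D h ≫ eqToHom (congrArg (stateObj α · v) hD) =
      eqToHom (congrArg (stateObj α · u) hD) ≫ stateMap α D' h := by
  subst hD
  simp

end SignedStates

section TupMVHom

variable {B : Type u} [Category.{v} B] {κ ι : Type} [DecidableEq ι]

theorem toSignHom_heq {s : Bool} {P Q P' Q' : B} (hP : P = P') (hQ : Q = Q')
    {f : SignHom s P Q} {f' : SignHom s P' Q'} (h : HEq f f') :
    HEq (toSignHom f) (toSignHom f') := by
  subst hP hQ
  rw [eq_of_heq h]

theorem powCat_hom_heq {α : κ → Bool} {P Q P' Q' : PowCat B α} (hP : P = P') (hQ : Q = Q')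
    {f : P ⟶ Q} {f' : P' ⟶ Q'} (h : ∀ j, HEq (f j) (f' j)) : HEq f f' := by
  subst hP hQ
  exact heq_of_eq (funext fun j => eq_of_heq (h j))

theorem tupMVHom_apply_heq_of_eq (α : κ → Bool) (σ : κ → ι) (A : ι → B) (i : ι)
    {e₁ e₂ : Bool → B} (g : e₂ false ⟶ e₁ false) (h : e₁ true ⟶ e₂ true) {j : κ}
    (hj : σ j = i) :
    HEq (tupMVHom α σ A i e₁ e₂ g h j) (toSignHom (mvHom g h (α j))) := by
  refine toSignHom_heq (if_pos hj) (if_pos hj) ?_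
  rw [dif_pos hj]
  exact HEq.symm (heq_of_eqRec_eq _ rfl)

theorem tupMVHom_apply_heq_of_ne (α : κ → Bool) (σ : κ → ι) (A : ι → B) (i : ι)
    {e₁ e₂ : Bool → B} (g : e₂ false ⟶ e₁ false) (h : e₁ true ⟶ e₂ true) {j : κ}
    (hj : σ j ≠ i) :
    HEq (tupMVHom α σ A i e₁ e₂ g h j) (𝟙 (toSign (α j) (A (σ j)))) := by
  have hid : toSignHom (signId (α j) (A (σ j))) = 𝟙 _ := by cases α j <;> rfl
  rw [← hid]
  refine toSignHom_heq (if_neg hj) (if_neg hj) ?_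
  rw [dif_neg hj]
  exact HEq.symm (heq_of_eqRec_eq _ rfl)

variable {α : κ → Bool} {σ : κ → ι} {A : ι → B} {i : ι} {D : ι → Bool ⥤ B} {D₀ : Bool ⥤ B}

theorem tupMV_eq_stateObj (hD : D i = D₀) {a : Bool → Bool} {e : Bool → B}
    (he : ∀ s, e s = D₀.obj (a s)) {u : κ → Bool} (hu : ∀ j, σ j = i → u j = a (α j))
    (hA : ∀ j, σ j ≠ i → (D (σ j)).obj (u j) = A (σ j)) :
    tupMV α σ A i e = stateObj α (fun j => D (σ j)) u := by
  funext j
  by_cases hj : σ j = i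
  · rw [tupMV, stateObj, if_pos hj, he, hu j hj, hj, hD]
  · rw [tupMV, stateObj, if_neg hj, hA j hj]

theorem tupMVHom_heq_stateMap (hD : D i = D₀) {a₁ a₂ : Bool → Bool}
    (ha : ∀ s, SignLE s (a₁ s) (a₂ s)) {e₁ e₂ : Bool → B}
    (he₁ : ∀ s, e₁ s = D₀.obj (a₁ s)) (he₂ : ∀ s, e₂ s = D₀.obj (a₂ s))
    {g : e₂ false ⟶ e₁ false} {h : e₁ true ⟶ e₂ true}
    (hgh : ∀ s, HEq (mvHom g h s) (stateHom D₀ s (ha s)))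
    {u v : κ → Bool} (huv : StateLE α u v)
    (hu : ∀ j, σ j = i → u j = a₁ (α j)) (hv : ∀ j, σ j = i → v j = a₂ (α j))
    (hoff : ∀ j, σ j ≠ i → u j = v j) (hA : ∀ j, σ j ≠ i → (D (σ j)).obj (u j) = A (σ j)) :
    HEq (tupMVHom α σ A i e₁ e₂ g h) (stateMap α (fun j => D (σ j)) huv) := by
  have hA' : ∀ j, σ j ≠ i → (D (σ j)).obj (v j) = A (σ j) := fun j hj => hoff j hj ▸ hA j hj
  refine powCat_hom_heq (tupMV_eq_stateObj hD he₁ hu hA) (tupMV_eq_stateObj hD he₂ hv hA')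
    fun j => ?_
  by_cases hj : σ j = i
  · have hDj : D (σ j) = D₀ := hj ▸ hD
    refine (tupMVHom_apply_heq_of_eq α σ A i g h hj).trans
      (toSignHom_heq ((he₁ _).trans (by simp only [hu j hj, hDj]))
        ((he₂ _).trans (by simp only [hv j hj, hDj])) ((hgh (α j)).trans ?_))
    exact stateHom_heq hDj.symm (hu j hj).symm (hv j hj).symm _ _
  · refine (tupMVHom_apply_heq_of_ne α σ A i g h hj).trans ?_
    have hself := toSignHom_stateHom_self (D (σ j)) (SignLE.refl (α j) (u j))
    refine HEq.trans ?_ (toSignHom_heq rfl (congrArg (D (σ j)).obj (hoff j hj))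
      (stateHom_heq (D := D (σ j)) rfl rfl (hoff j hj) (SignLE.refl (α j) (u j)) (huv j)))
    rw [hself, ← hA j hj]

end TupMVHom

section StateDinaturality

variable {B : Type u} [Category.{v} B] {C : Type u'} [Category.{v'} C] {κa κb ι : Type}
  {α : κa → Bool} {β : κb → Bool} {F : PowCat B α ⥤ C} {G : PowCat B β ⥤ C}
  {σ : κa → ι} {τ : κb → ι}

def Transf.atState (φ : Transf α β F G σ τ) (D : ι → Bool ⥤ B) (s : ι → Bool)
    {u : κa → Bool} {w : κb → Bool} (hu : StateLE α u fun j => s (σ j))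
    (hw : StateLE β (fun j => s (τ j)) w) :
    F.obj (stateObj α (fun j => D (σ j)) u) ⟶ G.obj (stateObj β (fun j => D (τ j)) w) :=
  F.map (stateMap α _ hu) ≫ φ (fun k => (D k).obj (s k)) ≫ G.map (stateMap β _ hw)

def StateDinatAt (φ : Transf α β F G σ τ) (x : ι) : Prop :=
  ∀ (D : ι → Bool ⥤ B) (s₀ s₁ : ι → Bool), (∀ k, k ≠ x → s₀ k = s₁ k) → s₀ x = false →
    s₁ x = true → ∀ {u : κa → Bool} {w : κb → Bool}
      (hu₀ : StateLE α u fun j => s₀ (σ j)) (hu₁ : StateLE α u fun j => s₁ (σ j))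
      (hw₀ : StateLE β (fun j => s₀ (τ j)) w) (hw₁ : StateLE β (fun j => s₁ (τ j)) w),
      φ.atState D s₀ hu₀ hw₀ = φ.atState D s₁ hu₁ hw₁

theorem Transf.map_comp_atState_comp_map (φ : Transf α β F G σ τ) (D : ι → Bool ⥤ B)
    (s : ι → Bool) {u u' : κa → Bool} {w w' : κb → Bool} (h₁ : StateLE α u u')
    (hu : StateLE α u' fun j => s (σ j)) (hw : StateLE β (fun j => s (τ j)) w)
    (h₂ : StateLE β w w') :
    F.map (stateMap α _ h₁) ≫ φ.atState D s hu hw ≫ G.map (stateMap β _ h₂) =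
      φ.atState D s (h₁.trans hu) (hw.trans h₂) := by
  simp only [Transf.atState, ← stateMap_comp α _ h₁ hu, ← stateMap_comp β _ hw h₂,
    Functor.map_comp, Category.assoc]

theorem Transf.map_comp_app_comp_map_heq (φ : Transf α β F G σ τ) {P P' : PowCat B α}
    {Q Q' : PowCat B β} {V V' : ι → B} (hP : P = P') (hV : V = V') (hQ : Q = Q')
    {a : P ⟶ tup α σ V} {a' : P' ⟶ tup α σ V'} {b : tup β τ V ⟶ Q} {b' : tup β τ V' ⟶ Q'}
    (ha : HEq a a') (hb : HEq b b') :
    HEq (F.map a ≫ φ V ≫ G.map b) (F.map a' ≫ φ V' ≫ G.map b') := by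
  subst hP hV hQ
  rw [eq_of_heq ha, eq_of_heq hb]

end StateDinaturality

section DinatIff

variable {B : Type u} [Category.{v} B] {C : Type u'} [Category.{v'} C] {κa κb ι : Type}
  [DecidableEq ι] {α : κa → Bool} {β : κb → Bool} {F : PowCat B α ⥤ C} {G : PowCat B β ⥤ C}
  {σ : κa → ι} {τ : κb → ι} {x : ι}

/-- The state of the domain of the hexagon of `DinatAt` in `x`, off `x` following `s`. -/
def srcState {κ : Type} (α : κ → Bool) (σ : κ → ι) (x : ι) (s : ι → Bool) : κ → Bool :=
  fun j => if σ j = x then !α j else s (σ j)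

/-- The state of the codomain of the hexagon of `DinatAt` in `x`, off `x` following `s`. -/
def tgtState {κ : Type} (β : κ → Bool) (τ : κ → ι) (x : ι) (s : ι → Bool) : κ → Bool :=
  fun j => if τ j = x then β j else s (τ j)

theorem srcState_le (α : κa → Bool) (σ : κa → ι) {s₀ s : ι → Bool}
    (hs : ∀ k, k ≠ x → s₀ k = s k) : StateLE α (srcState α σ x s₀) fun j => s (σ j) := by
  intro j
  by_cases hj : σ j = x
  · rw [srcState, if_pos hj]
    exact signLE_not_left _ _
  · rw [srcState, if_neg hj, hs _ hj]
    exact SignLE.refl _ _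

theorem le_tgtState (β : κb → Bool) (τ : κb → ι) {s₀ s : ι → Bool}
    (hs : ∀ k, k ≠ x → s₀ k = s k) : StateLE β (fun j => s (τ j)) (tgtState β τ x s₀) := by
  intro j
  by_cases hj : τ j = x
  · rw [tgtState, if_pos hj]
    exact signLE_self_right _ _
  · rw [tgtState, if_neg hj, hs _ hj]
    exact SignLE.refl _ _

theorem StateLE.le_srcState {u : κa → Bool} {s₀ s₁ : ι → Bool}
    (h₀ : StateLE α u fun j => s₀ (σ j)) (h₁ : StateLE α u fun j => s₁ (σ j))
    (hs₀ : s₀ x = false) (hs₁ : s₁ x = true) : StateLE α u (srcState α σ x s₀) := by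
  intro j
  by_cases hj : σ j = x
  · have h₀j := h₀ j
    have h₁j := h₁ j
    simp only [hj, hs₀, hs₁] at h₀j h₁j
    rw [srcState, if_pos hj]
    exact h₀j.not_left_of_false_of_true h₁j
  · rw [srcState, if_neg hj]
    exact h₀ j

theorem StateLE.tgtState_le {w : κb → Bool} {s₀ s₁ : ι → Bool}
    (h₀ : StateLE β (fun j => s₀ (τ j)) w) (h₁ : StateLE β (fun j => s₁ (τ j)) w)
    (hs₀ : s₀ x = false) (hs₁ : s₁ x = true) : StateLE β (tgtState β τ x s₀) w := by
  intro j
  by_cases hj : τ j = x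
  · have h₀j := h₀ j
    have h₁j := h₁ j
    simp only [hj, hs₀, hs₁] at h₀j h₁j
    rw [tgtState, if_pos hj]
    exact h₀j.self_right_of_false_of_true h₁j
  · rw [tgtState, if_neg hj]
    exact h₀ j

/-- A side of the hexagon of `DinatAt` in `x`, with the arrow `D₀` at `x` and the objects `A`
elsewhere, is a composite through `φ` at a state. -/
theorem Transf.atState_heq (φ : Transf α β F G σ τ) {D : ι → Bool ⥤ B} {D₀ : Bool ⥤ B}
    (hD : D x = D₀) {s₀ s : ι → Bool} (hs : ∀ k, k ≠ x → s₀ k = s k) {b : Bool} (hb : s x = b)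
    {A : ι → B} (hA : ∀ k, k ≠ x → (D k).obj (s₀ k) = A k)
    {g : D₀.obj b ⟶ D₀.obj true} {h : D₀.obj false ⟶ D₀.obj b}
    (hgh : ∀ t, HEq (mvHom (e₁ := fun t => bif t then D₀.obj false else D₀.obj true)
      (e₂ := fun _ => D₀.obj b) g h t) (stateHom D₀ t (signLE_not_left t b)))
    {g' : D₀.obj false ⟶ D₀.obj b} {h' : D₀.obj b ⟶ D₀.obj true}
    (hgh' : ∀ t, HEq (mvHom (e₁ := fun _ => D₀.obj b)
      (e₂ := fun t => bif t then D₀.obj true else D₀.obj false) g' h' t)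
      (stateHom D₀ t (signLE_self_right t b))) :
    HEq (φ.atState D s (srcState_le α σ hs) (le_tgtState β τ hs))
      (F.map (tupMVHom α σ A x (fun t => bif t then D₀.obj false else D₀.obj true)
          (fun _ => D₀.obj b) g h) ≫ φ (upd A x (D₀.obj b)) ≫
        G.map (tupMVHom β τ A x (fun _ => D₀.obj b)
          (fun t => bif t then D₀.obj true else D₀.obj false) g' h')) := by
  have hbool : ∀ t : Bool, (bif t then D₀.obj false else D₀.obj true) = D₀.obj (!t) ∧
      (bif t then D₀.obj true else D₀.obj false) = D₀.obj t := by
    intro t; cases t <;> exact ⟨rfl, rfl⟩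
  have hbj : ∀ {κ} (ρ : κ → ι) (j : κ), ρ j = x → s (ρ j) = b := fun ρ j hj => hj ▸ hb
  have hsrc_on : ∀ j, σ j = x → srcState α σ x s₀ j = !α j := fun j hj => if_pos hj
  have hsrc_off : ∀ j, σ j ≠ x → srcState α σ x s₀ j = s (σ j) := fun j hj =>
    (if_neg hj).trans (hs _ hj)
  have htgt_on : ∀ j, τ j = x → tgtState β τ x s₀ j = β j := fun j hj => if_pos hj
  have htgt_off : ∀ j, τ j ≠ x → tgtState β τ x s₀ j = s (τ j) := fun j hj =>
    (if_neg hj).trans (hs _ hj)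
  have hA' : ∀ k, k ≠ x → (D k).obj (s k) = A k := fun k hk => hs k hk ▸ hA k hk
  refine φ.map_comp_app_comp_map_heq (V := fun k => (D k).obj (s k)) (V' := upd A x (D₀.obj b))
    ?_ ?_ ?_
    (tupMVHom_heq_stateMap hD (fun t => signLE_not_left t b) (fun t => (hbool t).1)
      (fun _ => rfl) hgh (srcState_le α σ hs) hsrc_on (hbj σ) (fun j hj => hsrc_off j hj)
      (fun j hj => (hsrc_off j hj).symm ▸ hA' _ hj)).symm
    (tupMVHom_heq_stateMap hD (fun t => signLE_self_right t b) (fun _ => rfl)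
      (fun t => (hbool t).2) hgh' (le_tgtState β τ hs) (hbj τ) htgt_on
      (fun j hj => (htgt_off j hj).symm) (fun j hj => hA' _ hj)).symm
  · exact (tupMV_eq_stateObj hD (fun t => (hbool t).1) hsrc_on
      (fun j hj => (hsrc_off j hj).symm ▸ hA' _ hj)).symm
  · funext k
    by_cases hk : k = x
    · subst hk
      simp only [upd, if_pos, hb, hD]
    · simp only [upd, if_neg hk, hA' k hk]
  · exact (tupMV_eq_stateObj hD (fun t => (hbool t).2) htgt_on
      (fun j hj => (htgt_off j hj).symm ▸ hA' _ hj)).symm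

theorem mvHom_heq_stateHom_src (D₀ : Bool ⥤ B) :
    (∀ t, HEq (mvHom (e₁ := fun t => bif t then D₀.obj false else D₀.obj true)
      (e₂ := fun _ => D₀.obj false) (D₀.map (homOfLE (Bool.false_le true))) (𝟙 _) t)
      (stateHom D₀ t (signLE_not_left t false))) ∧
    (∀ t, HEq (mvHom (e₁ := fun t => bif t then D₀.obj false else D₀.obj true)
      (e₂ := fun _ => D₀.obj true) (𝟙 _) (D₀.map (homOfLE (Bool.false_le true))) t)
      (stateHom D₀ t (signLE_not_left t true))) := by
  constructor <;> intro t <;> cases t <;>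
    exact heq_of_eq (by first | rfl | exact (D₀.map_id _).symm)

theorem mvHom_heq_stateHom_tgt (D₀ : Bool ⥤ B) :
    (∀ t, HEq (mvHom (e₁ := fun _ => D₀.obj false)
      (e₂ := fun t => bif t then D₀.obj true else D₀.obj false) (𝟙 _)
      (D₀.map (homOfLE (Bool.false_le true))) t)
      (stateHom D₀ t (signLE_self_right t false))) ∧
    (∀ t, HEq (mvHom (e₁ := fun _ => D₀.obj true)
      (e₂ := fun t => bif t then D₀.obj true else D₀.obj false)
      (D₀.map (homOfLE (Bool.false_le true))) (𝟙 _) t)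
      (stateHom D₀ t (signLE_self_right t true))) := by
  constructor <;> intro t <;> cases t <;>
    exact heq_of_eq (by first | rfl | exact (D₀.map_id _).symm)

theorem DinatAt.stateDinatAt {φ : Transf α β F G σ τ} (hφ : DinatAt φ x) :
    StateDinatAt φ x := by
  intro D s₀ s₁ hs hs₀ hs₁ u w hu₀ hu₁ hw₀ hw₁
  obtain ⟨hX, hY⟩ := mvHom_heq_stateHom_src (D x)
  obtain ⟨hX', hY'⟩ := mvHom_heq_stateHom_tgt (D x)
  have hexagon := (φ.atState_heq rfl (fun _ _ => rfl) hs₀ (fun _ _ => rfl) hX hX').trans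
    ((heq_of_eq (hφ (fun k => (D k).obj (s₀ k)) ((D x).map (homOfLE (Bool.false_le true))))).trans
      (φ.atState_heq rfl hs hs₁ (fun _ _ => rfl) hY hY').symm)
  have hsrc := hu₀.le_srcState hu₁ hs₀ hs₁
  have htgt := hw₀.tgtState_le hw₁ hs₀ hs₁
  rw [← φ.map_comp_atState_comp_map D s₀ hsrc (srcState_le α σ fun _ _ => rfl)
      (le_tgtState β τ fun _ _ => rfl) htgt,
    ← φ.map_comp_atState_comp_map D s₁ hsrc (srcState_le α σ hs) (le_tgtState β τ hs) htgt,
    eq_of_heq hexagon]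

def arrowFunctor {X Y : B} (f : X ⟶ Y) : Bool ⥤ B where
  obj b := bif b then Y else X
  map {a b} h := match a, b, h with
    | false, false, _ => 𝟙 X
    | false, true, _ => f
    | true, true, _ => 𝟙 Y
    | true, false, h => absurd (leOfHom h) (by decide)
  map_id := by rintro (_ | _) <;> rfl
  map_comp := by
    rintro (_ | _) (_ | _) (_ | _) g h <;>
      first
      | exact absurd (leOfHom g) (by decide)
      | exact absurd (leOfHom h) (by decide)
      | simp

theorem StateDinatAt.dinatAt {φ : Transf α β F G σ τ} (hφ : StateDinatAt φ x) :
    DinatAt φ x := by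
  intro A X Y f
  let D := upd (fun k => (Functor.const Bool).obj (A k)) x (arrowFunctor f)
  have hD : D x = arrowFunctor f := if_pos rfl
  have hA : ∀ k, k ≠ x → (D k).obj false = A k := fun k hk => by simp [D, upd, hk]
  have hs : ∀ k, k ≠ x → (fun _ => false) k = decide (k = x) := fun k hk => by simp [hk]
  obtain ⟨hX, hY⟩ := mvHom_heq_stateHom_src (arrowFunctor f)
  obtain ⟨hX', hY'⟩ := mvHom_heq_stateHom_tgt (arrowFunctor f)
  exact eq_of_heq ((φ.atState_heq hD (fun _ _ => rfl) rfl hA hX hX').symm.trans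
    ((heq_of_eq (hφ D _ _ hs rfl (decide_eq_true rfl) _ _ _ _)).trans
      (φ.atState_heq hD hs (decide_eq_true rfl) hA hY hY')))

theorem dinatAt_iff_stateDinatAt {φ : Transf α β F G σ τ} : DinatAt φ x ↔ StateDinatAt φ x :=
  ⟨DinatAt.stateDinatAt, StateDinatAt.dinatAt⟩

end DinatIff

section VcompAt

variable {B : Type u} [Category.{v} B] {C : Type u'} [Category.{v'} C]
  {κa κb κc ι₁ ι₂ ι : Type} {α : κa → Bool} {β : κb → Bool} {γ : κc → Bool}
  {F : PowCat B α ⥤ C} {G : PowCat B β ⥤ C} {H : PowCat B γ ⥤ C}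
  {σ₁ : κa → ι₁} {τ₁ : κb → ι₁} {σ₂ : κb → ι₂} {τ₂ : κc → ι₂} {ζ : ι₁ → ι} {ξ : ι₂ → ι}

theorem comp_family_eq (hcomm : ∀ p, ζ (τ₁ p) = ξ (σ₂ p)) (D : ι → Bool ⥤ B) :
    (fun j => D (ζ (τ₁ j))) = fun j => D (ξ (σ₂ j)) :=
  funext fun j => congrArg D (hcomm j)

variable (φ : Transf α β F G σ₁ τ₁) (ψ : Transf β γ G H σ₂ τ₂)
  (hcomm : ∀ p, ζ (τ₁ p) = ξ (σ₂ p)) (D : ι → Bool ⥤ B) {u : κa → Bool} {w : κc → Bool}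

/-- `ψ ∘ φ` with `φ` evaluated at state `p` and `ψ` at state `q`. -/
def vcompAt (p : ι₁ → Bool) (q : ι₂ → Bool) (hu : StateLE α u fun j => p (σ₁ j))
    (hpq : StateLE β (fun j => p (τ₁ j)) fun j => q (σ₂ j))
    (hw : StateLE γ (fun j => q (τ₂ j)) w) :
    F.obj (stateObj α (fun j => D (ζ (σ₁ j))) u) ⟶ H.obj (stateObj γ (fun j => D (ξ (τ₂ j))) w) :=
  φ.atState (fun x => D (ζ x)) p hu hpq ≫
    G.map (eqToHom (congrArg (stateObj β · fun j => q (σ₂ j)) (comp_family_eq hcomm D))) ≫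
    ψ (fun y => (D (ξ y)).obj (q y)) ≫ H.map (stateMap γ _ hw)

theorem vcompAt_congr {p p' : ι₁ → Bool} {q q' : ι₂ → Bool} (hp : p = p') (hq : q = q')
    {hu : StateLE α u fun j => p (σ₁ j)} {hpq : StateLE β (fun j => p (τ₁ j)) fun j => q (σ₂ j)}
    {hw : StateLE γ (fun j => q (τ₂ j)) w} {hu' : StateLE α u fun j => p' (σ₁ j)}
    {hpq' : StateLE β (fun j => p' (τ₁ j)) fun j => q' (σ₂ j)}
    {hw' : StateLE γ (fun j => q' (τ₂ j)) w} :
    vcompAt φ ψ hcomm D p q hu hpq hw = vcompAt φ ψ hcomm D p' q' hu' hpq' hw' := by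
  subst hp hq
  rfl

theorem vcompAt_eq_comp_atState (p : ι₁ → Bool) (q : ι₂ → Bool)
    (hu : StateLE α u fun j => p (σ₁ j)) (hpq : StateLE β (fun j => p (τ₁ j)) fun j => q (σ₂ j))
    (hw : StateLE γ (fun j => q (τ₂ j)) w) :
    vcompAt φ ψ hcomm D p q hu hpq hw =
      F.map (stateMap α _ hu) ≫ φ (fun x => (D (ζ x)).obj (p x)) ≫
        G.map (eqToHom (congrArg (stateObj β · fun j => p (τ₁ j)) (comp_family_eq hcomm D))) ≫
        ψ.atState (fun y => D (ξ y)) q hpq hw := by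
  simp only [vcompAt, Transf.atState, Category.assoc]
  rw [← G.map_comp_assoc, stateMap_comp_eqToHom β (comp_family_eq hcomm D) hpq, G.map_comp_assoc]

theorem vcompAt_fire_left {x : ι₁} (hφ : StateDinatAt φ x) {p p' : ι₁ → Bool} (q : ι₂ → Bool)
    (hs : ∀ k, k ≠ x → p k = p' k) (h₀ : p x = false) (h₁ : p' x = true)
    (hu : StateLE α u fun j => p (σ₁ j)) (hpq : StateLE β (fun j => p (τ₁ j)) fun j => q (σ₂ j))
    (hu' : StateLE α u fun j => p' (σ₁ j))
    (hpq' : StateLE β (fun j => p' (τ₁ j)) fun j => q (σ₂ j))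
    (hw : StateLE γ (fun j => q (τ₂ j)) w) :
    vcompAt φ ψ hcomm D p q hu hpq hw = vcompAt φ ψ hcomm D p' q hu' hpq' hw := by
  simp only [vcompAt]
  rw [hφ (fun x => D (ζ x)) p p' hs h₀ h₁ hu hu' hpq hpq']

theorem vcompAt_fire_right {y : ι₂} (hψ : StateDinatAt ψ y) (p : ι₁ → Bool) {q q' : ι₂ → Bool}
    (hs : ∀ k, k ≠ y → q k = q' k) (h₀ : q y = false) (h₁ : q' y = true)
    (hu : StateLE α u fun j => p (σ₁ j)) (hpq : StateLE β (fun j => p (τ₁ j)) fun j => q (σ₂ j))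
    (hpq' : StateLE β (fun j => p (τ₁ j)) fun j => q' (σ₂ j))
    (hw : StateLE γ (fun j => q (τ₂ j)) w) (hw' : StateLE γ (fun j => q' (τ₂ j)) w) :
    vcompAt φ ψ hcomm D p q hu hpq hw = vcompAt φ ψ hcomm D p q' hu hpq' hw' := by
  rw [vcompAt_eq_comp_atState, vcompAt_eq_comp_atState,
    hψ (fun y => D (ξ y)) q q' hs h₀ h₁ hpq hpq' hw hw']

theorem vcompAt_eq_atState_vcomp (s : ι → Bool) (hu : StateLE α u fun j => s (ζ (σ₁ j)))
    (hpq : StateLE β (fun j => s (ζ (τ₁ j))) fun j => s (ξ (σ₂ j)))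
    (hw : StateLE γ (fun j => s (ξ (τ₂ j))) w) :
    vcompAt φ ψ hcomm D (fun x => s (ζ x)) (fun y => s (ξ y)) hu hpq hw =
      (vcomp φ ψ ζ ξ hcomm).atState D s hu hw := by
  simp only [vcompAt, Transf.atState, vcomp, Category.assoc]
  rw [stateMap_of_eq β _ (funext fun j => congrArg s (hcomm j))]
  simp [eqToHom_map]

end VcompAt

section Firing

variable {T : Type*} {R : T → T → Prop}

def UpClosed (R : T → T → Prop) (S : T → Bool) : Prop :=
  ∀ ⦃t t'⦄, R t t' → S t = true → S t' = true

theorem upClosed_false (R : T → T → Prop) : UpClosed R fun _ => false :=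
  fun _ _ _ h => absurd h Bool.false_ne_true

theorem UpClosed.update_true [DecidableEq T] {S : T → Bool} (hS : UpClosed R S) {t : T}
    (ht : ∀ t', Relation.TransGen R t t' → S t' = true) :
    UpClosed R (Function.update S t true) := by
  intro t₁ t₂ h h₁
  by_cases ht₂ : t₂ = t
  · rw [ht₂, Function.update_self]
  rw [Function.update_of_ne ht₂]
  by_cases ht₁ : t₁ = t
  · exact ht t₂ (ht₁ ▸ .single h)
  · exact hS h (by rwa [Function.update_of_ne ht₁] at h₁)

theorem card_update_true_lt [Fintype T] [DecidableEq T] {S : T → Bool} {t : T}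
    (ht : S t = false) :
    (Finset.univ.filter fun t' => Function.update S t true t' = false).card <
      (Finset.univ.filter fun t' => S t' = false).card := by
  refine Finset.card_lt_card ((Finset.ssubset_iff_of_subset fun t' => ?_).2 ⟨t, ?_, ?_⟩)
  · by_cases h : t' = t
    · simp [h, ht]
    · simp [Function.update_of_ne h]
  · simp [ht]
  · simp

/-- In an acyclic relation some unfired element has no unfired successor, and firing it keeps
the state up-closed; so a property of up-closed states that holds when everything has fired
and is reflected by such firings holds for every up-closed state. -/
theorem UpClosed.induction [Fintype T] [DecidableEq T] (hR : ∀ t, ¬ Relation.TransGen R t t)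
    {P : (T → Bool) → Prop} (htop : P fun _ => true)
    (hfire : ∀ S t, S t = false → UpClosed R (Function.update S t true) →
      P (Function.update S t true) → P S) {S : T → Bool} (hS : UpClosed R S) : P S := by
  induction hn : (Finset.univ.filter fun t => S t = false).card using Nat.strong_induction_on
    generalizing S with
  | _ n ih =>
  by_cases hall : ∀ t, S t = true
  · obtain rfl : S = fun _ => true := funext hall
    exact htop
  have : IsTrans T (flip (Relation.TransGen R)) := ⟨fun _ _ _ h₁ h₂ => h₂.trans h₁⟩
  have : Std.Irrefl (flip (Relation.TransGen R)) := ⟨hR⟩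
  obtain ⟨t, ht, hlast⟩ :=
    (Finite.wellFounded_of_trans_of_irrefl (flip (Relation.TransGen R))).has_min
      {t | S t = false} (by simpa [Set.Nonempty] using hall)
  have hS' := hS.update_true fun t' h => by
    by_contra hf
    exact hlast t' (by simpa using hf) h
  exact hfire S t ht hS' (ih _ (hn ▸ card_update_true_lt ht) hS' rfl)

end Firing

section LiftState

variable {ι₁ ι : Type} [DecidableEq ι] {ζ : ι₁ → ι} {i : ι}

/-- The state of the transitions of one net when only those over `i` move. -/
def liftState (ζ : ι₁ → ι) (i : ι) (s : ι → Bool) (S : ι₁ → Bool) : ι₁ → Bool :=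
  fun x => if ζ x = i then S x else s (ζ x)

theorem liftState_apply_of_eq {x : ι₁} (hx : ζ x = i) (s : ι → Bool) (S : ι₁ → Bool) :
    liftState ζ i s S x = S x :=
  if_pos hx

theorem liftState_eq_or {s₀ s₁ : ι → Bool} (hs₀ : s₀ i = false) (hs₁ : s₁ i = true)
    (S : ι₁ → Bool) (x : ι₁) :
    liftState ζ i s₀ S x = s₀ (ζ x) ∨ liftState ζ i s₀ S x = s₁ (ζ x) := by
  unfold liftState
  split_ifs with hx
  · rw [hx, hs₀, hs₁]
    cases S x <;> simp
  · exact .inl rfl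

theorem liftState_false {s : ι → Bool} (hs : s i = false) :
    liftState ζ i s (fun _ => false) = fun x => s (ζ x) := by
  funext x
  unfold liftState
  split_ifs with hx
  · rw [hx, hs]
  · rfl

theorem liftState_true {s₀ s₁ : ι → Bool} (hs : ∀ k, k ≠ i → s₀ k = s₁ k) (hs₁ : s₁ i = true) :
    liftState ζ i s₀ (fun _ => true) = fun x => s₁ (ζ x) := by
  funext x
  unfold liftState
  split_ifs with hx
  · rw [hx, hs₁]
  · exact hs _ hx

theorem liftState_update_of_ne [DecidableEq ι₁] {x : ι₁} (hx : ζ x ≠ i) (s : ι → Bool)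
    (S : ι₁ → Bool) (b : Bool) :
    liftState ζ i s (Function.update S x b) = liftState ζ i s S := by
  funext k
  unfold liftState
  split_ifs with hk
  · exact Function.update_of_ne (by rintro rfl; exact hx hk) _ _
  · rfl

theorem liftState_update_apply_of_ne [DecidableEq ι₁] {x k : ι₁} (hk : k ≠ x) (s : ι → Bool)
    (S : ι₁ → Bool) (b : Bool) :
    liftState ζ i s (Function.update S x b) k = liftState ζ i s S k := by
  simp only [liftState, Function.update_of_ne hk]

variable {ι₂ κ : Type} {ξ : ι₂ → ι} {β : κ → Bool} {τ₁ : κ → ι₁} {σ₂ : κ → ι₂}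

theorem stateLE_liftState (hcomm : ∀ p, ζ (τ₁ p) = ξ (σ₂ p)) (s : ι → Bool)
    {S₁ : ι₁ → Bool} {S₂ : ι₂ → Bool} (h : StateLE β (fun j => S₁ (τ₁ j)) fun j => S₂ (σ₂ j)) :
    StateLE β (fun j => liftState ζ i s S₁ (τ₁ j)) fun j => liftState ξ i s S₂ (σ₂ j) := by
  intro j
  dsimp only
  by_cases hj : ζ (τ₁ j) = i
  · rw [liftState_apply_of_eq hj, liftState_apply_of_eq ((hcomm j).symm.trans hj)]
    exact h j
  · simp only [liftState, if_neg (fun h => hj ((hcomm j).trans h)), hcomm j]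
    exact SignLE.refl _ _

end LiftState

section VcompAtLiftState

variable {B : Type u} [Category.{v} B] {C : Type u'} [Category.{v'} C]
  {κa κb κc ι₁ ι₂ ι : Type} [DecidableEq ι]
  {α : κa → Bool} {β : κb → Bool} {γ : κc → Bool}
  {F : PowCat B α ⥤ C} {G : PowCat B β ⥤ C} {H : PowCat B γ ⥤ C}
  {σ₁ : κa → ι₁} {τ₁ : κb → ι₁} {σ₂ : κb → ι₂} {τ₂ : κc → ι₂} {ζ : ι₁ → ι} {ξ : ι₂ → ι}
  {φ : Transf α β F G σ₁ τ₁} {ψ : Transf β γ G H σ₂ τ₂} {hcomm : ∀ p, ζ (τ₁ p) = ξ (σ₂ p)}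
  {D : ι → Bool ⥤ B} {u : κa → Bool} {w : κc → Bool} {i : ι} {s : ι → Bool}

theorem vcompAt_liftState_fire_left [DecidableEq ι₁] (hφ : ∀ x, StateDinatAt φ x)
    {S₁ : ι₁ → Bool} (S₂ : ι₂ → Bool) {x : ι₁} (hx : S₁ x = false)
    (hu : StateLE α u fun j => liftState ζ i s S₁ (σ₁ j))
    (hpq : StateLE β (fun j => liftState ζ i s S₁ (τ₁ j)) fun j => liftState ξ i s S₂ (σ₂ j))
    (hu' : StateLE α u fun j => liftState ζ i s (Function.update S₁ x true) (σ₁ j))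
    (hpq' : StateLE β (fun j => liftState ζ i s (Function.update S₁ x true) (τ₁ j))
      fun j => liftState ξ i s S₂ (σ₂ j))
    (hw : StateLE γ (fun j => liftState ξ i s S₂ (τ₂ j)) w) :
    vcompAt φ ψ hcomm D _ _ hu hpq hw = vcompAt φ ψ hcomm D _ _ hu' hpq' hw := by
  by_cases hxi : ζ x = i
  · refine vcompAt_fire_left φ ψ hcomm D (hφ x) _
      (fun k hk => (liftState_update_apply_of_ne hk s S₁ true).symm) ?_ ?_ hu hpq hu' hpq' hw
    · rw [liftState_apply_of_eq hxi, hx]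
    · rw [liftState_apply_of_eq hxi, Function.update_self]
  · exact vcompAt_congr φ ψ hcomm D (liftState_update_of_ne hxi s S₁ true).symm rfl

theorem vcompAt_liftState_fire_right [DecidableEq ι₂] (hψ : ∀ y, StateDinatAt ψ y)
    (S₁ : ι₁ → Bool) {S₂ : ι₂ → Bool} {y : ι₂} (hy : S₂ y = false)
    (hu : StateLE α u fun j => liftState ζ i s S₁ (σ₁ j))
    (hpq : StateLE β (fun j => liftState ζ i s S₁ (τ₁ j)) fun j => liftState ξ i s S₂ (σ₂ j))
    (hw : StateLE γ (fun j => liftState ξ i s S₂ (τ₂ j)) w)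
    (hpq' : StateLE β (fun j => liftState ζ i s S₁ (τ₁ j))
      fun j => liftState ξ i s (Function.update S₂ y true) (σ₂ j))
    (hw' : StateLE γ (fun j => liftState ξ i s (Function.update S₂ y true) (τ₂ j)) w) :
    vcompAt φ ψ hcomm D _ _ hu hpq hw = vcompAt φ ψ hcomm D _ _ hu hpq' hw' := by
  by_cases hyi : ξ y = i
  · refine vcompAt_fire_right φ ψ hcomm D (hψ y) _
      (fun k hk => (liftState_update_apply_of_ne hk s S₂ true).symm) ?_ ?_ hu hpq hpq' hw hw'
    · rw [liftState_apply_of_eq hyi, hy]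
    · rw [liftState_apply_of_eq hyi, Function.update_self]
  · exact vcompAt_congr φ ψ hcomm D rfl (liftState_update_of_ne hyi s S₂ true).symm

end VcompAtLiftState

section CompositeGraph

variable {wa wb wc n m : ℕ} {α : Fin wa → Bool} {β : Fin wb → Bool} {γ : Fin wc → Bool}
  {σ₁ : Fin wa → Fin n} {τ₁ : Fin wb → Fin n} {σ₂ : Fin wb → Fin m} {τ₂ : Fin wc → Fin m}

/-- `t'` follows `t` through one place of `Γ(ψ) ∘ Γ(φ)`. -/
def compNext (α : Fin wa → Bool) (β : Fin wb → Bool) (γ : Fin wc → Bool)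
    (σ₁ : Fin wa → Fin n) (τ₁ : Fin wb → Fin n) (σ₂ : Fin wb → Fin m) (τ₂ : Fin wc → Fin m)
    (t t' : Fin n ⊕ Fin m) : Prop :=
  ∃ v, compArc α β γ σ₁ τ₁ σ₂ τ₂ (.inr t) v ∧ compArc α β γ σ₁ τ₁ σ₂ τ₂ v (.inr t')

theorem compNext_acyclic
    (hacyclic : ∀ v, ¬ Relation.TransGen (compArc α β γ σ₁ τ₁ σ₂ τ₂) v v) (t : Fin n ⊕ Fin m) :
    ¬ Relation.TransGen (compNext α β γ σ₁ τ₁ σ₂ τ₂) t t := fun h =>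
  hacyclic _ (Relation.TransGen.lift' (r := compNext α β γ σ₁ τ₁ σ₂ τ₂) Sum.inr
    (fun _ _ ⟨_, h₁, h₂⟩ => .tail (.single h₁) h₂) t t h)

theorem UpClosed.stateLE_mid {S : Fin n ⊕ Fin m → Bool}
    (hS : UpClosed (compNext α β γ σ₁ τ₁ σ₂ τ₂) S) :
    StateLE β (fun j => S (.inl (τ₁ j))) fun j => S (.inr (σ₂ j)) := by
  intro j
  cases hβ : β j
  · exact Bool.le_iff_imp.2 (hS ⟨.inl (.inr (.inl j)), ⟨rfl, hβ⟩, rfl, hβ⟩)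
  · exact Bool.le_iff_imp.2 (hS ⟨.inl (.inr (.inl j)), ⟨rfl, hβ⟩, rfl, hβ⟩)

end CompositeGraph

section Vcomp

variable {B : Type u} [Category.{v} B] {C : Type u'} [Category.{v'} C] {wa wb wc n m l : ℕ}
  {α : Fin wa → Bool} {β : Fin wb → Bool} {γ : Fin wc → Bool}
  {F : PowCat B α ⥤ C} {G : PowCat B β ⥤ C} {H : PowCat B γ ⥤ C}
  {σ₁ : Fin wa → Fin n} {τ₁ : Fin wb → Fin n} {σ₂ : Fin wb → Fin m} {τ₂ : Fin wc → Fin m}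
  {φ : Transf α β F G σ₁ τ₁} {ψ : Transf β γ G H σ₂ τ₂} {ζ : Fin n → Fin l} {ξ : Fin m → Fin l}

theorem UpClosed.stateLE_liftState (hcomm : ∀ p, ζ (τ₁ p) = ξ (σ₂ p)) (i : Fin l)
    (s : Fin l → Bool)
    {S : Fin n ⊕ Fin m → Bool} (hS : UpClosed (compNext α β γ σ₁ τ₁ σ₂ τ₂) S) :
    StateLE β (fun j => liftState ζ i s (S ∘ Sum.inl) (τ₁ j))
      fun j => liftState ξ i s (S ∘ Sum.inr) (σ₂ j) :=
  _root_.stateLE_liftState hcomm s hS.stateLE_mid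

theorem vcompAt_liftState_eq_top {hcomm : ∀ p, ζ (τ₁ p) = ξ (σ₂ p)} {D : Fin l → Bool ⥤ B}
    {u : Fin wa → Bool} {w : Fin wc → Bool} {i : Fin l} {s : Fin l → Bool}
    (hφ : ∀ x, StateDinatAt φ x) (hψ : ∀ y, StateDinatAt ψ y)
    (hacyclic : ∀ v, ¬ Relation.TransGen (compArc α β γ σ₁ τ₁ σ₂ τ₂) v v)
    (hu : ∀ S₁, StateLE α u fun j => liftState ζ i s S₁ (σ₁ j))
    (hw : ∀ S₂, StateLE γ (fun j => liftState ξ i s S₂ (τ₂ j)) w)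
    {S : Fin n ⊕ Fin m → Bool} (hS : UpClosed (compNext α β γ σ₁ τ₁ σ₂ τ₂) S) :
    vcompAt φ ψ hcomm D _ _ (hu (S ∘ Sum.inl)) (hS.stateLE_liftState hcomm i s) (hw (S ∘ Sum.inr)) =
      vcompAt φ ψ hcomm D _ _ (hu fun _ => true)
        (stateLE_liftState hcomm s fun _ => SignLE.refl _ _) (hw fun _ => true) := by
  refine UpClosed.induction (P := fun S => ∀ hS : UpClosed _ S, vcompAt φ ψ hcomm D _ _
    (hu (S ∘ Sum.inl)) (hS.stateLE_liftState hcomm i s) (hw (S ∘ Sum.inr)) = _)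
    (compNext_acyclic hacyclic) (fun _ => rfl) ?_ hS hS
  rintro S (x | y) ht hS' ih hS
  · have hpq' := hS'.stateLE_liftState hcomm i s
    rw [Sum.update_inl_comp_inl, Sum.update_inl_comp_inr] at hpq'
    exact (vcompAt_liftState_fire_left hφ _ ht _ _ (hu _) hpq' (hw _)).trans
      ((vcompAt_congr φ ψ hcomm D (by rw [Sum.update_inl_comp_inl])
        (by rw [Sum.update_inl_comp_inr])).trans (ih hS'))
  · have hpq' := hS'.stateLE_liftState hcomm i s
    rw [Sum.update_inr_comp_inl, Sum.update_inr_comp_inr] at hpq'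
    exact (vcompAt_liftState_fire_right hψ _ ht _ _ (hw _) hpq' (hw _)).trans
      ((vcompAt_congr φ ψ hcomm D (by rw [Sum.update_inr_comp_inl])
        (by rw [Sum.update_inr_comp_inr])).trans (ih hS'))

theorem stateDinatAt_vcomp (hφ : ∀ x, StateDinatAt φ x) (hψ : ∀ y, StateDinatAt ψ y)
    (hcomm : ∀ p, ζ (τ₁ p) = ξ (σ₂ p))
    (hacyclic : ∀ v, ¬ Relation.TransGen (compArc α β γ σ₁ τ₁ σ₂ τ₂) v v) (i : Fin l) :
    StateDinatAt (vcomp φ ψ ζ ξ hcomm) i := by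
  intro D s₀ s₁ hs hs₀ hs₁ u w hu₀ hu₁ hw₀ hw₁
  have hu (S₁ : Fin n → Bool) : StateLE α u fun j => liftState ζ i s₀ S₁ (σ₁ j) :=
    hu₀.of_eq_or_right hu₁ fun j => liftState_eq_or hs₀ hs₁ S₁ (σ₁ j)
  have hw (S₂ : Fin m → Bool) : StateLE γ (fun j => liftState ξ i s₀ S₂ (τ₂ j)) w :=
    hw₀.of_eq_or_left hw₁ fun j => liftState_eq_or hs₀ hs₁ S₂ (τ₂ j)
  have hmid (s : Fin l → Bool) : StateLE β (fun j => s (ζ (τ₁ j))) fun j => s (ξ (σ₂ j)) :=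
    fun j => by
      dsimp only
      rw [hcomm j]
      exact SignLE.refl _ _
  calc (vcomp φ ψ ζ ξ hcomm).atState D s₀ hu₀ hw₀
      = vcompAt φ ψ hcomm D _ _ hu₀ (hmid s₀) hw₀ :=
        (vcompAt_eq_atState_vcomp φ ψ hcomm D _ _ _ _).symm
    _ = vcompAt φ ψ hcomm D _ _ (hu fun _ => false)
          (stateLE_liftState hcomm s₀ fun _ => SignLE.refl _ _) (hw fun _ => false) :=
        vcompAt_congr φ ψ hcomm D (liftState_false hs₀).symm (liftState_false hs₀).symm
    _ = vcompAt φ ψ hcomm D _ _ hu₁ (hmid s₁) hw₁ :=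
        (vcompAt_liftState_eq_top hφ hψ hacyclic hu hw (upClosed_false _)).trans
          (vcompAt_congr φ ψ hcomm D (liftState_true hs hs₁) (liftState_true hs hs₁))
    _ = (vcomp φ ψ ζ ξ hcomm).atState D s₁ hu₁ hw₁ := vcompAt_eq_atState_vcomp φ ψ hcomm D _ _ _ _

end Vcomp

theorem vcomp_dinatural_of_acyclic_general
    {B : Type u} [Category.{v} B] {C : Type u'} [Category.{v'} C]
    {wa wb wc n m l : ℕ}
    {α : Fin wa → Bool} {β : Fin wb → Bool} {γ : Fin wc → Bool}
    {F : PowCat B α ⥤ C} {G : PowCat B β ⥤ C} {H : PowCat B γ ⥤ C}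
    {σ₁ : Fin wa → Fin n} {τ₁ : Fin wb → Fin n} {σ₂ : Fin wb → Fin m} {τ₂ : Fin wc → Fin m}
    (φ : Transf α β F G σ₁ τ₁) (ψ : Transf β γ G H σ₂ τ₂)
    (hφ : ∀ x, DinatAt φ x) (hψ : ∀ x, DinatAt ψ x)
    (ζ : Fin n → Fin l) (ξ : Fin m → Fin l)
    (hcomm : ∀ p, ζ (τ₁ p) = ξ (σ₂ p))
    (hacyclic : ∀ v : CGV wa wb wc n m,
      ¬ Relation.TransGen (compArc α β γ σ₁ τ₁ σ₂ τ₂) v v) :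
    ∀ i, DinatAt (vcomp φ ψ ζ ξ hcomm) i := fun i =>
  dinatAt_iff_stateDinatAt.2 <|
    stateDinatAt_vcomp (fun x => dinatAt_iff_stateDinatAt.1 (hφ x))
      (fun y => dinatAt_iff_stateDinatAt.1 (hψ y)) hcomm hacyclic i

/-- Let `φ : F → G` and `ψ : G → H` be transformations, dinatural in all
of their variables.  If the composite graph `Γ(ψ) ∘ Γ(φ)` is acyclic, then the vertical
composite `ψ ∘ φ` is dinatural in all of its variables. -/
theorem vcomp_dinatural_of_acyclic
    {B : Type u} [Category.{v} B] {C : Type u'} [Category.{v'} C]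
    {wa wb wc n m l : ℕ} (hn : 0 < n) (hm : 0 < m) (hl : 0 < l)
    {α : Fin wa → Bool} {β : Fin wb → Bool} {γ : Fin wc → Bool}
    {F : PowCat B α ⥤ C} {G : PowCat B β ⥤ C} {H : PowCat B γ ⥤ C}
    {σ₁ : Fin wa → Fin n} {τ₁ : Fin wb → Fin n} {σ₂ : Fin wb → Fin m} {τ₂ : Fin wc → Fin m}
    (φ : Transf α β F G σ₁ τ₁) (ψ : Transf β γ G H σ₂ τ₂)
    (hφ : ∀ x, DinatAt φ x) (hψ : ∀ x, DinatAt ψ x)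
    (ζ : Fin n → Fin l) (ξ : Fin m → Fin l)
    (hcomm : ∀ p, ζ (τ₁ p) = ξ (σ₂ p))
    (hpush : ∀ (Z : Type) (u : Fin n → Z) (v : Fin m → Z), (∀ p, u (τ₁ p) = v (σ₂ p)) →
      ∃! w : Fin l → Z, (∀ x, w (ζ x) = u x) ∧ ∀ y, w (ξ y) = v y)
    (hacyclic : ∀ v : CGV wa wb wc n m,
      ¬ Relation.TransGen (compArc α β γ σ₁ τ₁ σ₂ τ₂) v v) :
    ∀ i, DinatAt (vcomp φ ψ ζ ξ hcomm) i :=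
  vcomp_dinatural_of_acyclic_general φ ψ hφ hψ ζ ξ hcomm hacyclic
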